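/- arXiv:1408.3225 — 2 statements merged into one kernel-verified Lean document; each statement's English description precedes it below -/
import Mathlib

section
/- Let a₁, a₂ be positive integers coprime to a positive integer b. Then 2·I(a₁,b) ≡ 2·I(a₂,b) (mod b) if and only if 6·s(a₁,b) - 6·s(a₂,b) is an integer. -/
/-!
Write `r k = a * k % b`. For `i ≤ j` we have `r i + r (j - i) ≡ r j [MOD b]`, and the sum
exceeds `r j` (by exactly `b`) iff `r j < r i`. Summing over all pairs `i ≤ j < b` therefore
gives `b * I(a,b) + 3 ∑ k r k + ∑ r k = 2 b ∑ r k`. On the other hand `((k/b)) = k/b - 1/2` and,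
for `a` coprime to `b`, `((ka/b)) = r k / b - 1/2` for `0 < k < b`, so `b² s(a,b)` is also
`∑ k r k` up to explicit terms. As `r` permutes `{0, …, b-1}`, eliminating `∑ k r k` yields
`2 I(a,b) + 6 b s(a,b) = (b-1)(b-2)/2`, whence `6 s(a₁,b) - 6 s(a₂,b) = 2 (I(a₂,b) - I(a₁,b)) / b`.
-/

/-- The sawtooth function ((x)) = x - ⌊x⌋ - 1/2 for non-integer x, and 0 for integer x. -/
def saw (x : ℚ) : ℚ := if x.den = 1 then 0 else x - ⌊x⌋ - 1/2

/-- The Dedekind sum s(a,b) = Σ_{k=1}^{b-1} ((k/b))((ka/b)). -/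
def dedekindSum (a b : ℕ) : ℚ :=
  ∑ k ∈ Finset.range b, saw ((k : ℚ) / b) * saw ((k * a : ℚ) / b)

/-- I(a,b): the number of inversions of the permutation x ↦ ax mod b on {0,...,b-1}. -/
def inv' (a b : ℕ) : ℕ :=
  (((Finset.range b) ×ˢ (Finset.range b)).filter
    (fun p => p.1 < p.2 ∧ (a * p.2) % b < (a * p.1) % b)).card

open Finset

theorem add_mod_add_ite_lt_mod (x z b : ℕ) :
    (x + z) % b + (if (x + z) % b < x % b then b else 0) = x % b + z % b := by
  have h := Nat.add_mod_add_ite x z b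
  rcases Nat.eq_zero_or_pos b with rfl | hb
  · simp
  have hz := Nat.mod_lt z hb
  split_ifs at h ⊢ <;> omega

theorem sum_range_mul_mod_of_coprime {M : Type*} [AddCommMonoid M] {a b : ℕ}
    (h : a.Coprime b) (f : ℕ → M) :
    ∑ k ∈ range b, f (a * k % b) = ∑ k ∈ range b, f k := by
  have hmaps : Set.MapsTo (fun k => a * k % b) (range b) (range b) := fun k hk =>
    mem_range.2 (Nat.mod_lt _ (pos_of_ne_zero (by rintro rfl; simp at hk)))
  have hinj : Set.InjOn (fun k => a * k % b) (range b) := fun i hi j hj hij =>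
    Nat.ModEq.eq_of_lt_of_lt (Nat.ModEq.cancel_left_of_coprime h.symm hij)
      (mem_range.1 hi) (mem_range.1 hj)
  exact sum_nbij _ hmaps hinj (surjOn_of_injOn_of_card_le _ hmaps hinj le_rfl)
    fun _ _ => rfl

theorem sum_range_sum_range_succ_add_sum_nsmul {M : Type*} [AddCommMonoid M]
    (f : ℕ → M) (n : ℕ) :
    ∑ j ∈ range n, ∑ i ∈ range (j + 1), f i + ∑ i ∈ range n, i • f i
      = n • ∑ i ∈ range n, f i := by
  induction n with
  | zero => simp
  | succ n ih =>
    rw [sum_range_succ, sum_range_succ (fun i => i • f i), sum_range_succ, succ_nsmul,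
      nsmul_add, ← ih]
    abel

/- The diagonal pairs `i = j` contribute nothing; including them makes the inner range
symmetric under `i ↦ j - i`. -/
theorem inv'_eq_sum (a b : ℕ) :
    inv' a b = ∑ j ∈ range b, ∑ i ∈ range (j + 1), if a * j % b < a * i % b then 1 else 0 := by
  rw [inv', card_filter, sum_product_right]
  refine sum_congr rfl fun j hj => ?_
  rw [← sum_subset (range_subset_range.2 (mem_range.1 hj))]
  · refine sum_congr rfl fun i hi => ?_
    rcases (Nat.lt_succ_iff.1 (mem_range.1 hi)).lt_or_eq with hij | rfl
    · simp [hij]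
    · simp
  · intro i _ hi
    simp only [mem_range, not_lt] at hi
    simp [show ¬ i < j by omega]

theorem mul_inv'_add_three_mul_sum (a b : ℕ) :
    b * inv' a b + 3 * ∑ k ∈ range b, k * (a * k % b) + ∑ k ∈ range b, a * k % b
      = 2 * b * ∑ k ∈ range b, a * k % b := by
  rw [inv'_eq_sum]
  set r : ℕ → ℕ := fun k => a * k % b
  change b * ∑ j ∈ range b, ∑ i ∈ range (j + 1), (if r j < r i then 1 else 0)
    + 3 * ∑ k ∈ range b, k * r k + ∑ k ∈ range b, r k = 2 * b * ∑ k ∈ range b, r k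
  have hpair : ∀ j, ∀ i ∈ range (j + 1),
      r j + (if r j < r i then b else 0) = r i + r (j - i) := by
    intro j i hi
    have h := add_mod_add_ite_lt_mod (a * i) (a * (j - i)) b
    rwa [← mul_add, Nat.add_sub_cancel' (Nat.lt_succ_iff.1 (mem_range.1 hi))] at h
  have hrow : ∀ j, (j + 1) * r j + b * ∑ i ∈ range (j + 1), (if r j < r i then 1 else 0)
      = 2 * ∑ i ∈ range (j + 1), r i := by
    intro j
    calc (j + 1) * r j + b * ∑ i ∈ range (j + 1), (if r j < r i then 1 else 0)
        = ∑ i ∈ range (j + 1), (r j + if r j < r i then b else 0) := by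
          simp only [sum_add_distrib, sum_const, card_range, smul_eq_mul, mul_sum, mul_ite,
            mul_one, mul_zero]
      _ = ∑ i ∈ range (j + 1), (r i + r (j - i)) := sum_congr rfl (hpair j)
      _ = 2 * ∑ i ∈ range (j + 1), r i := by
          rw [sum_add_distrib, ← sum_range_reflect r (j + 1)]
          simp only [Nat.add_sub_cancel, two_mul]
  have htri := sum_range_sum_range_succ_add_sum_nsmul r b
  simp only [smul_eq_mul] at htri
  have hrows := congrArg (fun f => ∑ j ∈ range b, f j) (funext hrow)
  simp only [sum_add_distrib, ← mul_sum, add_mul, one_mul] at hrows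
  linarith

theorem saw_natCast_div {m b : ℕ} (hb : b ≠ 0) (h : ¬ b ∣ m) :
    saw (m / b) = ((m % b : ℕ) : ℚ) / b - 1 / 2 := by
  rw [saw, if_neg (by rwa [Rat.den_div_natCast_eq_one_iff _ _ hb]), Int.self_sub_floor,
    Int.fract_div_natCast_eq_div_natCast_mod]

theorem sum_range_natCast_mul_two {R : Type*} [CommRing R] (n : ℕ) :
    (∑ k ∈ range n, (k : R)) * 2 = n * (n - 1) := by
  induction n with
  | zero => simp
  | succ n ih => rw [sum_range_succ, add_mul, ih]; push_cast; ring

theorem sq_mul_dedekindSum {a b : ℕ} (hb : 0 < b) (h : a.Coprime b) :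
    (b : ℚ) ^ 2 * dedekindSum a b
      = ∑ k ∈ range b, (k : ℚ) * (a * k % b : ℕ) - (b : ℚ) ^ 2 * (b - 1) / 4 := by
  have hcentered : (b : ℚ) ^ 2 * dedekindSum a b
      = ∑ k ∈ range b, ((k : ℚ) - b / 2) * ((a * k % b : ℕ) - b / 2) - (b : ℚ) ^ 2 / 4 := by
    obtain ⟨n, rfl⟩ := Nat.exists_eq_add_one_of_ne_zero hb.ne'
    rw [dedekindSum, mul_sum, sum_range_succ', sum_range_succ']
    have hterm : ∀ k ∈ range n, (↑(n + 1) : ℚ) ^ 2 * (saw (↑(k + 1) / ↑(n + 1))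
        * saw (↑(k + 1) * ↑a / ↑(n + 1))) = ((↑(k + 1) : ℚ) - ↑(n + 1) / 2)
          * ((a * (k + 1) % (n + 1) : ℕ) - ↑(n + 1) / 2) := by
      intro k hk
      have hk : k + 1 < n + 1 := by simpa using hk
      have hndvd : ¬ n + 1 ∣ k + 1 := Nat.not_dvd_of_pos_of_lt k.succ_pos hk
      rw [saw_natCast_div (n.succ_ne_zero) hndvd, Nat.mod_eq_of_lt hk, ← Nat.cast_mul,
        saw_natCast_div (n.succ_ne_zero) (fun hd => hndvd (h.symm.dvd_of_dvd_mul_right hd)),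
        mul_comm (k + 1) a]
      field_simp
    rw [sum_congr rfl hterm]
    simp only [Nat.cast_add, Nat.cast_one, saw, CharP.cast_eq_zero, zero_div, Rat.den_ofNat,
      ↓reduceIte, zero_mul, mul_zero, add_zero, zero_sub, Nat.zero_mod, mul_neg, neg_mul, neg_neg]
    ring
  have hperm := sum_range_mul_mod_of_coprime h (fun k => (k : ℚ))
  have hgauss := sum_range_natCast_mul_two (R := ℚ) b
  rw [hcentered]
  simp only [sub_mul, mul_sub, sum_sub_distrib, ← sum_mul, ← mul_sum, sum_const, card_range,
    nsmul_eq_mul] at hperm ⊢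
  linear_combination (-(b : ℚ) / 2) * hperm - (b : ℚ) / 2 * hgauss

theorem two_mul_inv'_add_six_mul_dedekindSum {a b : ℕ} (hb : 0 < b) (h : a.Coprime b) :
    2 * (inv' a b : ℚ) + 6 * b * dedekindSum a b = ((b : ℚ) - 1) * (b - 2) / 2 := by
  have hinv : (b : ℚ) * inv' a b + 3 * ∑ k ∈ range b, (k : ℚ) * (a * k % b : ℕ)
      + ∑ k ∈ range b, ((a * k % b : ℕ) : ℚ) = 2 * b * ∑ k ∈ range b, ((a * k % b : ℕ) : ℚ) := by
    exact_mod_cast mul_inv'_add_three_mul_sum a b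
  have hperm := sum_range_mul_mod_of_coprime h (fun k => (k : ℚ))
  have hgauss := sum_range_natCast_mul_two (R := ℚ) b
  have hded := sq_mul_dedekindSum hb h
  refine mul_left_cancel₀ (Nat.cast_ne_zero.2 hb.ne' : (b : ℚ) ≠ 0) ?_
  linear_combination 2 * hinv + 6 * hded + (4 * (b : ℚ) - 2) * hperm + (2 * (b : ℚ) - 1) * hgauss

theorem exists_intCast_eq_div_iff_dvd {m n : ℤ} (hn : n ≠ 0) :
    (∃ k : ℤ, (m : ℚ) / n = k) ↔ n ∣ m := by
  constructor
  · rintro ⟨k, hk⟩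
    rw [div_eq_iff (Int.cast_ne_zero.2 hn)] at hk
    exact ⟨k, by rw [mul_comm]; exact_mod_cast hk⟩
  · rintro ⟨k, rfl⟩
    exact ⟨k, by push_cast; field_simp⟩

theorem two_inv_congr_iff_six_int_general (a₁ a₂ b : ℕ) (hb : 0 < b)
    (h₁ : Nat.Coprime a₁ b) (h₂ : Nat.Coprime a₂ b) :
    (2 * inv' a₁ b : ℤ) ≡ 2 * inv' a₂ b [ZMOD (b : ℤ)] ↔
      ∃ n : ℤ, 6 * dedekindSum a₁ b - 6 * dedekindSum a₂ b = n := by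
  have hbQ : (b : ℚ) ≠ 0 := Nat.cast_ne_zero.2 hb.ne'
  have hdiff : 6 * dedekindSum a₁ b - 6 * dedekindSum a₂ b
      = ((2 * inv' a₂ b - 2 * inv' a₁ b : ℤ) : ℚ) / (b : ℤ) := by
    rw [Int.cast_natCast, eq_div_iff hbQ]
    push_cast
    linear_combination two_mul_inv'_add_six_mul_dedekindSum hb h₁
      - two_mul_inv'_add_six_mul_dedekindSum hb h₂
  rw [Int.modEq_iff_dvd, hdiff, exists_intCast_eq_div_iff_dvd (by exact_mod_cast hb.ne')]

theorem two_inv_congr_iff_six_int (a₁ a₂ b : ℕ) (ha₁ : 0 < a₁) (ha₂ : 0 < a₂) (hb : 0 < b)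
    (h₁ : Nat.Coprime a₁ b) (h₂ : Nat.Coprime a₂ b) :
    (2 * inv' a₁ b : ℤ) ≡ 2 * inv' a₂ b [ZMOD (b : ℤ)] ↔
      ∃ n : ℤ, 6 * dedekindSum a₁ b - 6 * dedekindSum a₂ b = n :=
  two_inv_congr_iff_six_int_general a₁ a₂ b hb h₁ h₂
end

section
/- Let a₁, a₂ be positive integers coprime to a positive integer b. Then 3·s(a₁,b) - 3·s(a₂,b) is an integer if and only if 4b divides (a₁-a₂)(b-1)(b+a₁a₂-1). -/
open Finset

theorem saw_natCast_div_of_not_dvd {n b : ℕ} (hb : b ≠ 0) (h : ¬ b ∣ n) :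
    saw (n / b) = (n % b : ℕ) / b - 1 / 2 := by
  rw [saw, if_neg (by rwa [Rat.den_div_natCast_eq_one_iff n b hb]), Int.self_sub_floor,
    Int.fract_div_natCast_eq_div_natCast_mod]

theorem Nat.Coprime.sum_range_mul_mod {M : Type*} [AddCommMonoid M] {a b : ℕ} (h : a.Coprime b)
    (f : ℕ → M) : ∑ t ∈ range b, f (a * t % b) = ∑ t ∈ range b, f t := by
  have hmaps : Set.MapsTo (fun t => a * t % b) (range b : Set ℕ) (range b) :=
    fun t ht => mem_range.2 (Nat.mod_lt _ (Nat.zero_lt_of_lt (mem_range.1 ht)))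
  have hinj : Set.InjOn (fun t => a * t % b) (range b : Set ℕ) := fun i hi j hj hij =>
    (Nat.ModEq.cancel_left_of_coprime h.symm hij).eq_of_lt_of_lt (mem_range.1 hi) (mem_range.1 hj)
  have hbij := ((range b).finite_toSet.injOn_iff_bijOn_of_mapsTo hmaps).1 hinj
  exact sum_nbij _ (fun _ ht => hmaps ht) hbij.injOn hbij.surjOn fun _ _ => rfl

theorem two_mul_sum_range_natCast {R : Type*} [CommRing R] (n : ℕ) :
    2 * ∑ t ∈ range n, (t : R) = n * (n - 1) := by
  induction n with
  | zero => simp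
  | succ n ih => rw [sum_range_succ, mul_add, ih]; push_cast; ring

theorem six_mul_sum_range_natCast_sq {R : Type*} [CommRing R] (n : ℕ) :
    6 * ∑ t ∈ range n, (t : R) ^ 2 = n * (n - 1) * (2 * n - 1) := by
  induction n with
  | zero => simp
  | succ n ih => rw [sum_range_succ, mul_add, ih]; push_cast; ring

theorem Nat.cast_mod_eq_sub_mul_div {R : Type*} [CommRing R] (n b : ℕ) :
    ((n % b : ℕ) : R) = n - b * (n / b : ℕ) := by
  rw [eq_sub_iff_add_eq]
  exact mod_cast congrArg (Nat.cast : ℕ → R) (Nat.mod_add_div n b)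

theorem Rat.exists_intCast_eq_div_natCast_iff {m : ℤ} {n : ℕ} (hn : n ≠ 0) :
    (∃ k : ℤ, (m : ℚ) / n = k) ↔ (n : ℤ) ∣ m := by
  rw [← Rat.den_div_intCast_eq_one_iff m n (Int.natCast_ne_zero.2 hn), Int.cast_natCast]
  exact ⟨fun ⟨k, hk⟩ => hk ▸ Rat.den_intCast k, fun hd => ⟨_, ((Rat.den_eq_one_iff _).1 hd).symm⟩⟩

theorem dvd_iff_four_mul_dvd_of_modEq {u b D N : ℤ} (hu : IsCoprime u b)
    (h : 4 * u * D ≡ (2 * b - 1) * N [ZMOD 4 * b]) : b ∣ D ↔ 4 * b ∣ N := by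
  have hcop : IsCoprime (4 * b) (2 * b - 1) := ⟨b, -(2 * b + 1), by ring⟩
  calc b ∣ D ↔ b ∣ u * D := ⟨fun hD => hD.mul_left u, hu.symm.dvd_of_dvd_mul_left⟩
    _ ↔ 4 * b ∣ 4 * u * D := by rw [mul_assoc 4 u, mul_dvd_mul_iff_left four_ne_zero]
    _ ↔ 4 * b ∣ (2 * b - 1) * N := h.dvd_iff
    _ ↔ 4 * b ∣ N := ⟨hcop.dvd_of_dvd_mul_left, fun hN => hN.mul_left _⟩

def weightedFloorSum (a b : ℕ) : ℤ :=
  ∑ t ∈ range b, (2 * (b : ℤ) - 1 - 3 * t) * (a * t / b : ℕ)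

section FloorSums

variable {a b : ℕ}

theorem dedekindSum_eq (hb : 0 < b) (h : a.Coprime b) :
    dedekindSum a b = (∑ t ∈ range b, (t : ℚ) * (a * t % b : ℕ)) / b ^ 2 - (b - 1) / 4 := by
  have hterm : ∀ k ∈ range b, saw ((k : ℚ) / b) * saw ((k * a : ℚ) / b) =
      ((k : ℚ) / b - 1 / 2) * ((a * k % b : ℕ) / b - 1 / 2) - if k = 0 then 1 / 4 else 0 := by
    intro k hk
    rcases eq_or_ne k 0 with rfl | hk0
    · norm_num [saw]
    have hbk : ¬ b ∣ k := fun hd => hk0 (Nat.eq_zero_of_dvd_of_lt hd (mem_range.1 hk))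
    have hbak : ¬ b ∣ a * k := fun hd => hbk (h.symm.dvd_of_dvd_mul_left hd)
    rw [saw_natCast_div_of_not_dvd hb.ne' hbk, Nat.mod_eq_of_lt (mem_range.1 hk),
      show (k * a : ℚ) = (a * k : ℕ) by push_cast; ring, saw_natCast_div_of_not_dvd hb.ne' hbak,
      if_neg hk0, sub_zero]
  have hgauss : 2 * ∑ t ∈ range b, (t : ℚ) = b * (b - 1) := two_mul_sum_range_natCast b
  have hperm : ∑ t ∈ range b, ((a * t % b : ℕ) : ℚ) = ∑ t ∈ range b, (t : ℚ) :=
    h.sum_range_mul_mod Nat.cast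
  have hexpand : ∀ k ∈ range b, ((k : ℚ) / b - 1 / 2) * ((a * k % b : ℕ) / b - 1 / 2) =
      (k : ℚ) * (a * k % b : ℕ) / b ^ 2 - (k : ℚ) / (2 * b) - ((a * k % b : ℕ) : ℚ) / (2 * b)
        + 1 / 4 :=
    fun k _ => by ring
  rw [dedekindSum, sum_congr rfl hterm, sum_sub_distrib, sum_ite_eq',
    if_pos (mem_range.2 hb)]
  simp only [sum_congr rfl hexpand, sum_add_distrib, sum_sub_distrib, ← sum_div, hperm,
    sum_const, card_range, nsmul_eq_mul]
  field_simp
  linear_combination (-4 * b : ℚ) * hgauss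

theorem two_mul_sum_div (hb : 0 < b) (h : a.Coprime b) :
    2 * ∑ t ∈ range b, ((a * t / b : ℕ) : ℤ) = (a - 1) * (b - 1) := by
  have hperm : ∑ t ∈ range b, ((a * t % b : ℕ) : ℤ) = ∑ t ∈ range b, (t : ℤ) :=
    h.sum_range_mul_mod Nat.cast
  have hsplit : ∑ t ∈ range b, ((a * t % b : ℕ) : ℤ) =
      a * ∑ t ∈ range b, (t : ℤ) - b * ∑ t ∈ range b, ((a * t / b : ℕ) : ℤ) := by
    simp only [mul_sum, ← sum_sub_distrib]
    exact sum_congr rfl fun t _ => by rw [Nat.cast_mod_eq_sub_mul_div]; push_cast; ring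
  apply mul_left_cancel₀ (Int.natCast_ne_zero.2 hb.ne')
  linear_combination 2 * hsplit - 2 * hperm + (a - 1 : ℤ) * two_mul_sum_range_natCast (R := ℤ) b

theorem twelve_mul_mul_sum_mul_div (hb : 0 < b) (h : a.Coprime b) :
    12 * a * ∑ t ∈ range b, (t : ℤ) * (a * t / b : ℕ) =
      (a ^ 2 - 1) * (b - 1) * (2 * b - 1) + 6 * b * ∑ t ∈ range b, ((a * t / b : ℕ) : ℤ) ^ 2 := by
  have hperm : ∑ t ∈ range b, ((a * t % b : ℕ) : ℤ) ^ 2 = ∑ t ∈ range b, (t : ℤ) ^ 2 :=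
    h.sum_range_mul_mod fun t => (t : ℤ) ^ 2
  have hsplit : ∑ t ∈ range b, ((a * t % b : ℕ) : ℤ) ^ 2 =
      a ^ 2 * ∑ t ∈ range b, (t : ℤ) ^ 2 - 2 * a * b * ∑ t ∈ range b, (t : ℤ) * (a * t / b : ℕ)
        + b ^ 2 * ∑ t ∈ range b, ((a * t / b : ℕ) : ℤ) ^ 2 := by
    simp only [mul_sum, ← sum_sub_distrib, ← sum_add_distrib]
    exact sum_congr rfl fun t _ => by rw [Nat.cast_mod_eq_sub_mul_div]; push_cast; ring
  apply mul_left_cancel₀ (Int.natCast_ne_zero.2 hb.ne')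
  linear_combination 6 * hsplit - 6 * hperm
    + (a ^ 2 - 1 : ℤ) * six_mul_sum_range_natCast_sq (R := ℤ) b

theorem weightedFloorSum_eq :
    weightedFloorSum a b = (2 * b - 1) * ∑ t ∈ range b, ((a * t / b : ℕ) : ℤ)
      - 3 * ∑ t ∈ range b, (t : ℤ) * (a * t / b : ℕ) := by
  simp only [weightedFloorSum, mul_sum, ← sum_sub_distrib]
  exact sum_congr rfl fun t _ => by ring

theorem four_mul_weightedFloorSum_modEq (hb : 0 < b) (h : a.Coprime b) :
    4 * a * weightedFloorSum a b ≡ (2 * b - 1) * (a - 1) * (b - 1) * (a + b - 1) [ZMOD 4 * b] := by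
  obtain ⟨m, hm⟩ : (2 : ℤ) ∣ ∑ t ∈ range b, ((a * t / b : ℕ) : ℤ) ^ 2
      - ∑ t ∈ range b, ((a * t / b : ℕ) : ℤ) := by
    rw [← sum_sub_distrib]
    exact dvd_sum fun t _ => by rw [sq, ← mul_sub_one]; exact (Int.even_mul_pred_self _).two_dvd
  rw [weightedFloorSum_eq, Int.modEq_iff_dvd]
  exact ⟨(b + 1) * ∑ t ∈ range b, ((a * t / b : ℕ) : ℤ) + 3 * m, by
    linear_combination twelve_mul_mul_sum_mul_div hb h + 6 * b * hm
      - (2 * b ^ 2 + 4 * a * b - 2 * a - b : ℤ) * two_mul_sum_div hb h⟩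

theorem twelve_mul_dedekindSum (hb : 0 < b) (h : a.Coprime b) :
    12 * b * dedekindSum a b = 4 * weightedFloorSum a b + (b - 1) * (b - 2) := by
  have hsplit : ∑ t ∈ range b, (t : ℚ) * (a * t % b : ℕ) =
      a * ∑ t ∈ range b, (t : ℚ) ^ 2 - b * ∑ t ∈ range b, (t : ℚ) * (a * t / b : ℕ) := by
    simp only [mul_sum, ← sum_sub_distrib]
    exact sum_congr rfl fun t _ => by rw [Nat.cast_mod_eq_sub_mul_div]; push_cast; ring
  have hJ : (weightedFloorSum a b : ℚ) = (2 * b - 1) * ∑ t ∈ range b, ((a * t / b : ℕ) : ℚ)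
      - 3 * ∑ t ∈ range b, (t : ℚ) * (a * t / b : ℕ) := by
    rw [weightedFloorSum_eq]; push_cast; rfl
  have hσ : 2 * ∑ t ∈ range b, ((a * t / b : ℕ) : ℚ) = (a - 1) * (b - 1) := by
    simpa only [Int.cast_mul, Int.cast_sum, Int.cast_natCast, Int.cast_sub, Int.cast_ofNat,
      Int.cast_one] using congrArg (Int.cast : ℤ → ℚ) (two_mul_sum_div hb h)
  rw [dedekindSum_eq hb h, hJ, hsplit]
  field_simp
  linear_combination 8 * a * six_mul_sum_range_natCast_sq (R := ℚ) b + 8 * b * (1 - 2 * b) * hσ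

end FloorSums

theorem three_mul_dedekindSum_sub_three_mul_dedekindSum {a₁ a₂ b : ℕ} (hb : 0 < b)
    (h₁ : a₁.Coprime b) (h₂ : a₂.Coprime b) :
    3 * dedekindSum a₁ b - 3 * dedekindSum a₂ b =
      ((weightedFloorSum a₁ b - weightedFloorSum a₂ b : ℤ) : ℚ) / b := by
  have hb0 : (b : ℚ) ≠ 0 := Nat.cast_ne_zero.2 hb.ne'
  field_simp
  push_cast
  linear_combination (twelve_mul_dedekindSum hb h₁ - twelve_mul_dedekindSum hb h₂) / 4

theorem four_mul_mul_weightedFloorSum_sub_modEq {a₁ a₂ b : ℕ} (hb : 0 < b)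
    (h₁ : a₁.Coprime b) (h₂ : a₂.Coprime b) :
    4 * (a₁ * a₂) * (weightedFloorSum a₁ b - weightedFloorSum a₂ b) ≡
      (2 * b - 1) * ((a₁ - a₂) * (b - 1) * (b + a₁ * a₂ - 1)) [ZMOD 4 * b] := by
  convert ((four_mul_weightedFloorSum_modEq hb h₁).mul_left a₂).sub
    ((four_mul_weightedFloorSum_modEq hb h₂).mul_left a₁) using 1 <;> ring

theorem three_int_iff_dvd_general (a₁ a₂ b : ℕ) (hb : 0 < b)
    (h₁ : Nat.Coprime a₁ b) (h₂ : Nat.Coprime a₂ b) :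
    (∃ n : ℤ, 3 * dedekindSum a₁ b - 3 * dedekindSum a₂ b = n) ↔
      (4 * b : ℤ) ∣ ((a₁ : ℤ) - a₂) * ((b : ℤ) - 1) * ((b : ℤ) + (a₁ : ℤ) * a₂ - 1) := by
  rw [three_mul_dedekindSum_sub_three_mul_dedekindSum hb h₁ h₂,
    Rat.exists_intCast_eq_div_natCast_iff hb.ne']
  exact dvd_iff_four_mul_dvd_of_modEq
    ((Nat.isCoprime_iff_coprime.2 h₁).mul_left (Nat.isCoprime_iff_coprime.2 h₂))
    (four_mul_mul_weightedFloorSum_sub_modEq hb h₁ h₂)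

theorem three_int_iff_dvd (a₁ a₂ b : ℕ) (ha₁ : 0 < a₁) (ha₂ : 0 < a₂) (hb : 0 < b)
    (h₁ : Nat.Coprime a₁ b) (h₂ : Nat.Coprime a₂ b) :
    (∃ n : ℤ, 3 * dedekindSum a₁ b - 3 * dedekindSum a₂ b = n) ↔
      (4 * b : ℤ) ∣ ((a₁ : ℤ) - a₂) * ((b : ℤ) - 1) * ((b : ℤ) + (a₁ : ℤ) * a₂ - 1) :=
  three_int_iff_dvd_general a₁ a₂ b hb h₁ h₂
end
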